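/- arXiv:1002.3818 — 2 statements merged into one kernel-verified Lean document; each statement's English description precedes it below -/
import Mathlib

section
/- Let V be a real linear space and let {‖·‖_α : α ∈ (0,1)} be a family of norms on V that is ascending (α ≤ β implies ‖x‖_α ≤ ‖x‖_β for all x) and satisfies condition (viii): for every monotone (increasing or decreasing) sequence (αₙ) in (0,1) converging to α ∈ (0,1), ‖x‖_{αₙ} → ‖x‖_α for every x ∈ V. Define ν : V × ℝ → [0,1] by ν(x,t) = inf{1−α : α ∈ (0,1), ‖x‖_α ≤ t} if (x,t) ≠ (0,0) (with the convention that the infimum of the empty set is 1), and ν(0,0) = 1. Define ‖x‖′_α = inf{t > 0 : ν(x,t) ≤ 1−α} for α ∈ (0,1). Then ‖x‖′_α = ‖x‖_α for every x ∈ V and every α ∈ (0,1). -/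
open Filter Topology Set
open scoped Classical

/-- A t-conorm on [0,1]. -/
def IsTConorm (d : ℝ → ℝ → ℝ) : Prop :=
  (∀ a b, a ∈ Icc (0:ℝ) 1 → b ∈ Icc (0:ℝ) 1 → d a b ∈ Icc (0:ℝ) 1) ∧
  (∀ a b, a ∈ Icc (0:ℝ) 1 → b ∈ Icc (0:ℝ) 1 → d a b = d b a) ∧
  (∀ a b c, a ∈ Icc (0:ℝ) 1 → b ∈ Icc (0:ℝ) 1 → c ∈ Icc (0:ℝ) 1 →
    d (d a b) c = d a (d b c)) ∧
  (∀ a, a ∈ Icc (0:ℝ) 1 → d a 0 = a) ∧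
  (∀ a b c e, a ∈ Icc (0:ℝ) 1 → b ∈ Icc (0:ℝ) 1 → c ∈ Icc (0:ℝ) 1 → e ∈ Icc (0:ℝ) 1 →
    a ≤ c → b ≤ e → d a b ≤ d c e)

/-- A fuzzy anti-norm on a real linear space `V` with respect to a t-conorm `d`. -/
def IsFuzzyAntiNorm {V : Type*} [AddCommGroup V] [Module ℝ V]
    (d : ℝ → ℝ → ℝ) (ν : V → ℝ → ℝ) : Prop :=
  (∀ x t, ν x t ∈ Icc (0:ℝ) 1) ∧
  (∀ x t, t ≤ 0 → ν x t = 1) ∧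
  (∀ x t, 0 < t → (ν x t = 0 ↔ x = 0)) ∧
  (∀ (c : ℝ) (x : V) (t : ℝ), 0 < t → c ≠ 0 → ν (c • x) t = ν x (t / |c|)) ∧
  (∀ x y s t, ν (x + y) (s + t) ≤ d (ν x s) (ν y t)) ∧
  (∀ x, Tendsto (ν x) atTop (𝓝 0))

/-- Condition (vi). -/
def CondVI {V : Type*} [AddCommGroup V] [Module ℝ V] (ν : V → ℝ → ℝ) : Prop :=
  ∀ x : V, (∀ t : ℝ, 0 < t → ν x t < 1) → x = 0

/-- Condition (vii). -/
def CondVII {V : Type*} [AddCommGroup V] [Module ℝ V] (ν : V → ℝ → ℝ) : Prop :=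
  ∀ x : V, Continuous (ν x) ∧ StrictAntiOn (ν x) {t : ℝ | 0 < ν x t ∧ ν x t < 1}

/-- The α-norm associated to a fuzzy anti-norm: ‖x‖*_α = inf {t > 0 : ν(x,t) ≤ 1-α}. -/
noncomputable def antiNorm {V : Type*} [AddCommGroup V] [Module ℝ V]
    (ν : V → ℝ → ℝ) (α : ℝ) (x : V) : ℝ :=
  sInf {t : ℝ | 0 < t ∧ ν x t ≤ 1 - α}

/-- Fuzzy α-anti-convergence of a sequence to a limit. -/
def FuzzyAntiConv {V : Type*} [AddCommGroup V] [Module ℝ V]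
    (ν : V → ℝ → ℝ) (α : ℝ) (x : ℕ → V) (l : V) : Prop :=
  ∀ t : ℝ, 0 < t → ∃ L : ℝ, Tendsto (fun n => ν (x n - l) t) atTop (𝓝 L) ∧ L < 1 - α

/-- Fuzzy α-anti-Cauchy sequence. -/
def FuzzyAntiCauchy {V : Type*} [AddCommGroup V] [Module ℝ V]
    (ν : V → ℝ → ℝ) (α : ℝ) (x : ℕ → V) : Prop :=
  ∀ t : ℝ, 0 < t → ∀ p : ℕ, 1 ≤ p →
    ∃ L : ℝ, Tendsto (fun n => ν (x n - x (n + p)) t) atTop (𝓝 L) ∧ L ≤ 1 - α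

theorem norm_family_reconstruction {V : Type*} [AddCommGroup V] [Module ℝ V]
    (N : ℝ → V → ℝ)
    (hnorm : ∀ α ∈ Ioo (0:ℝ) 1,
      (∀ x : V, 0 ≤ N α x) ∧
      (∀ x : V, N α x = 0 ↔ x = 0) ∧
      (∀ (c : ℝ) (x : V), N α (c • x) = |c| * N α x) ∧
      (∀ x y : V, N α (x + y) ≤ N α x + N α y))
    (hasc : ∀ α β : ℝ, α ∈ Ioo (0:ℝ) 1 → β ∈ Ioo (0:ℝ) 1 → α ≤ β →
      ∀ x : V, N α x ≤ N β x)
    (h8 : ∀ (a : ℕ → ℝ) (α : ℝ), (∀ n, a n ∈ Ioo (0:ℝ) 1) → α ∈ Ioo (0:ℝ) 1 →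
      (Monotone a ∨ Antitone a) → Tendsto a atTop (𝓝 α) →
      ∀ x : V, Tendsto (fun n => N (a n) x) atTop (𝓝 (N α x)))
    (ν : V → ℝ → ℝ)
    (hν : ∀ (x : V) (t : ℝ), ν x t = if x = 0 ∧ t = 0 then 1
      else sInf (insert 1 {r : ℝ | ∃ α ∈ Ioo (0:ℝ) 1, N α x ≤ t ∧ r = 1 - α})) :
    ∀ α ∈ Ioo (0:ℝ) 1, ∀ x : V, antiNorm ν α x = N α x := by
  intro α hα x
  obtain ⟨hα0, hα1⟩ := hα
  have hbdd : ∀ t : ℝ,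
      BddBelow (insert 1 {r : ℝ | ∃ β ∈ Ioo (0:ℝ) 1, N β x ≤ t ∧ r = 1 - β}) := by
    intro t
    refine ⟨0, ?_⟩
    rintro r (rfl | ⟨β, hβ, _, rfl⟩)
    · norm_num
    · linarith [hβ.2]
  have key : ∀ t : ℝ, 0 < t → (ν x t ≤ 1 - α ↔ N α x ≤ t) := by
    intro t ht
    rw [hν, if_neg (by rintro ⟨_, rfl⟩; exact lt_irrefl 0 ht)]
    constructor
    · intro h
      by_cases hcase : ∃ β ∈ Ico α 1, N β x ≤ t
      · obtain ⟨β, hβ, hNβ⟩ := hcase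
        exact le_trans (hasc α β ⟨hα0, hα1⟩ ⟨lt_of_lt_of_le hα0 hβ.1, hβ.2⟩ hβ.1 x) hNβ
      · push_neg at hcase
        have hS : ∀ β ∈ Ioo (0:ℝ) α, N β x ≤ t := by
          intro β hβ
          have hlt : sInf (insert 1 {r : ℝ | ∃ β' ∈ Ioo (0:ℝ) 1, N β' x ≤ t ∧ r = 1 - β'})
              < 1 - β := by linarith [hβ.2]
          obtain ⟨r, hr, hrlt⟩ := exists_lt_of_csInf_lt (Set.insert_nonempty _ _) hlt
          rcases hr with rfl | ⟨β', hβ', hNβ', rfl⟩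
          · linarith [hβ.1]
          · have hβlt : β < β' := by linarith
            exact le_trans (hasc β β' ⟨hβ.1, lt_trans hβ.2 hα1⟩ hβ' hβlt.le x) hNβ'
        set a : ℕ → ℝ := fun n => α - α / (n + 2) with ha
        have hnlt : ∀ n : ℕ, (1:ℝ) < n + 2 := by
          intro n; have := Nat.cast_nonneg (α := ℝ) n; linarith
        have han : ∀ n, a n ∈ Ioo (0:ℝ) α := by
          intro n
          constructor
          · have h1 : α / (n + 2) < α := div_lt_self hα0 (hnlt n)
            simp only [ha]; linarith
          · have h2 : 0 < α / ((n:ℝ) + 2) := by positivity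
            simp only [ha]; linarith
        have hmono : Monotone a := by
          intro m n hmn
          simp only [ha]
          have hmn' : ((m:ℝ) + 2) ≤ (n:ℝ) + 2 := by
            have : (m:ℝ) ≤ n := Nat.cast_le.mpr hmn
            linarith
          have : α / ((n:ℝ) + 2) ≤ α / ((m:ℝ) + 2) :=
            div_le_div_of_nonneg_left hα0.le (by positivity) hmn'
          linarith
        have hlim : Tendsto a atTop (𝓝 α) := by
          have h1 : Tendsto (fun n : ℕ => ((n:ℝ) + 2)) atTop atTop :=
            tendsto_atTop_add_const_right _ 2 tendsto_natCast_atTop_atTop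
          have h2 : Tendsto (fun n : ℕ => α / ((n:ℝ) + 2)) atTop (𝓝 0) :=
            Tendsto.div_atTop tendsto_const_nhds h1
          have := tendsto_const_nhds (x := α) (f := atTop (α := ℕ)) |>.sub h2
          simpa using this
        have htend := h8 a α (fun n => ⟨(han n).1, lt_trans (han n).2 hα1⟩)
          ⟨hα0, hα1⟩ (Or.inl hmono) hlim x
        exact le_of_tendsto htend (Filter.Eventually.of_forall fun n => hS _ (han n))
    · intro h
      exact csInf_le (hbdd t) (Or.inr ⟨α, ⟨hα0, hα1⟩, h, rfl⟩)
  have hset : {t : ℝ | 0 < t ∧ ν x t ≤ 1 - α} = {t : ℝ | 0 < t ∧ N α x ≤ t} := by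
    ext t
    exact ⟨fun ⟨ht, h⟩ => ⟨ht, (key t ht).mp h⟩, fun ⟨ht, h⟩ => ⟨ht, (key t ht).mpr h⟩⟩
  rw [antiNorm, hset]
  have hN0 := (hnorm α ⟨hα0, hα1⟩).1 x
  rcases eq_or_lt_of_le hN0 with h0 | h0
  · have hIoi : {t : ℝ | 0 < t ∧ N α x ≤ t} = Ioi 0 := by
      ext t
      simp only [mem_setOf_eq, mem_Ioi, ← h0]
      exact ⟨fun h => h.1, fun h => ⟨h, h.le⟩⟩
    rw [hIoi, csInf_Ioi, h0]
  · have hIci : {t : ℝ | 0 < t ∧ N α x ≤ t} = Ici (N α x) := by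
      ext t
      simp only [mem_setOf_eq, mem_Ici]
      exact ⟨fun h => h.2, fun h => ⟨lt_of_lt_of_le h0 h, h⟩⟩
    rw [hIci, csInf_Ici]
end

section
/- Let V be a real linear space and ν a fuzzy anti-norm on V with respect to the t-conorm a ⋄ b = max{a,b}, satisfying condition (vi). Let α ∈ (0,1). If a sequence (xₙ) in V is fuzzy α-anti-convergent to x ∈ V and also fuzzy α-anti-convergent to y ∈ V, then x = y. -/
open Filter Topology Set

theorem fuzzy_anti_limit_unique {V : Type*} [AddCommGroup V] [Module ℝ V]
    (ν : V → ℝ → ℝ) (hν : IsFuzzyAntiNorm (fun a b => max a b) ν) (h6 : CondVI ν)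
    (α : ℝ) (hα : α ∈ Ioo (0:ℝ) 1) (x : ℕ → V) (a b : V)
    (ha : FuzzyAntiConv ν α x a) (hb : FuzzyAntiConv ν α x b) :
    a = b := by
  obtain ⟨_, _, _, hhom, htri, _⟩ := hν
  have key : a - b = 0 := by
    apply h6
    intro t ht
    have ht2 : (0:ℝ) < t / 2 := by linarith
    obtain ⟨L₁, hL₁, hL₁'⟩ := ha (t/2) ht2
    obtain ⟨L₂, hL₂, hL₂'⟩ := hb (t/2) ht2
    have hle : ∀ n, ν (a - b) t ≤ max (ν (x n - a) (t/2)) (ν (x n - b) (t/2)) := by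
      intro n
      have h1 : ν (a - x n) (t/2) = ν (x n - a) (t/2) := by
        have : a - x n = (-1 : ℝ) • (x n - a) := by simp
        rw [this, hhom (-1) (x n - a) (t/2) ht2 (by norm_num)]
        simp
      have h2 := htri (a - x n) (x n - b) (t/2) (t/2)
      have heq : (a - x n) + (x n - b) = a - b := by abel
      have hsum : t/2 + t/2 = t := by ring
      rw [heq, hsum] at h2
      calc ν (a - b) t ≤ max (ν (a - x n) (t/2)) (ν (x n - b) (t/2)) := h2
        _ = max (ν (x n - a) (t/2)) (ν (x n - b) (t/2)) := by rw [h1]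
    have htend : Tendsto (fun n => max (ν (x n - a) (t/2)) (ν (x n - b) (t/2)))
        atTop (𝓝 (max L₁ L₂)) := hL₁.max hL₂
    have hfin : ν (a - b) t ≤ max L₁ L₂ :=
      ge_of_tendsto htend (Eventually.of_forall hle)
    have : max L₁ L₂ < 1 - α := max_lt hL₁' hL₂'
    have hα1 : α > 0 := hα.1
    linarith
  have := sub_eq_zero.mp key
  exact this
end
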